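/- Let x ∈ (F_{2^m})^n have pairwise distinct entries and let g ∈ F_{2^m}[X] be squarefree of degree t with 1 ≤ t ≤ n/2, not vanishing on any entry of x. Set y ∈ (F_{2^m})^n with y_i = g(x_i)^{-1}. Then GRS_t(x, y) ∩ GRS_t(x², y²) = {0} and GRS_t(x, y) + GRS_t(x², y²) = GRS_{2t}(x, y²), where x², y² denote componentwise squares; in particular GRS_{2t}(x, y²) = GRS_t(x, y) ⊕ GRS_t(x², y²). -/
import Mathlib

noncomputable section

/-- The generalized Reed–Solomon code `GRS_t(x,y) = span{y, yx, …, yx^{t-1}}`,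
with products and powers taken componentwise. -/
def GRS (F : Type) [Field F] {n : ℕ} (t : ℕ) (x y : Fin n → F) : Submodule F (Fin n → F) :=
  Submodule.span F ((fun a : ℕ => y * x ^ a) '' {a | a < t})

open Polynomial Submodule

namespace SyzAux

variable {F : Type} [Field F] {n : ℕ}

/-- Weighted evaluation map `p ↦ (w i * p(x i))_i`. -/
def ev (x w : Fin n → F) : F[X] →ₗ[F] (Fin n → F) where
  toFun p := fun i => w i * p.eval (x i)
  map_add' p q := by funext i; simp [mul_add]
  map_smul' c p := by funext i; simp [Polynomial.eval_smul]; ring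

@[simp] lemma ev_apply (x w : Fin n → F) (p : F[X]) (i : Fin n) :
    ev x w p i = w i * p.eval (x i) := rfl

lemma image_lt_eq_range {β : Type*} (f : ℕ → β) (t : ℕ) :
    f '' {a | a < t} = Set.range (fun a : Fin t => f (a : ℕ)) := by
  ext v
  simp only [Set.mem_image, Set.mem_setOf_eq, Set.mem_range]
  exact ⟨fun ⟨a, ha, h⟩ => ⟨⟨a, ha⟩, h⟩, fun ⟨a, h⟩ => ⟨a, a.isLt, h⟩⟩

lemma li_Xpow {k : ℕ} (e : Fin k → ℕ) (he : Function.Injective e) :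
    LinearIndependent F (fun a => (X : F[X]) ^ (e a)) := by
  have h := (Polynomial.basisMonomials F).linearIndependent.comp e he
  have : (fun a => (X : F[X]) ^ (e a)) = fun a => (Polynomial.basisMonomials F) (e a) := by
    funext a
    simp [Polynomial.coe_basisMonomials, Polynomial.X_pow_eq_monomial]
  rw [this]
  exact h

lemma span_Xpow_le_degreeLT {k N : ℕ} (e : Fin k → ℕ) (he : ∀ a, e a < N) :
    span F (Set.range fun a => (X : F[X]) ^ (e a)) ≤ degreeLT F N := by
  rw [span_le]
  rintro - ⟨a, rfl⟩
  rw [SetLike.mem_coe, Polynomial.mem_degreeLT, Polynomial.degree_X_pow]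
  exact_mod_cast he a

end SyzAux

open SyzAux

/-- Let `x ∈ (F_{2^m})^n` have pairwise distinct entries and
`g ∈ F_{2^m}[X]` squarefree of degree `t`, `1 ≤ t ≤ n/2`, not vanishing on any
entry of `x`; set `y_i = g(x_i)⁻¹`. Then `GRS_t(x,y) ∩ GRS_t(x²,y²) = 0` and
`GRS_t(x,y) + GRS_t(x²,y²) = GRS_{2t}(x,y²)` (componentwise squares). -/
theorem syzygy_distinguisher_stmt1
    (F : Type) [Field F] [Fintype F] (m : ℕ) (hm : 1 ≤ m)
    (hcard : Fintype.card F = 2 ^ m)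
    (n t : ℕ) (ht : 1 ≤ t) (htn : 2 * t ≤ n)
    (x : Fin n → F) (hx : Function.Injective x)
    (g : Polynomial F) (hdeg : g.natDegree = t) (hsqfr : Squarefree g)
    (hgx : ∀ i, g.eval (x i) ≠ 0)
    (y : Fin n → F) (hy : ∀ i, y i = (g.eval (x i))⁻¹) :
    GRS F t x y ⊓ GRS F t (x ^ 2) (y ^ 2) = ⊥
    ∧ GRS F t x y ⊔ GRS F t (x ^ 2) (y ^ 2) = GRS F (2 * t) x (y ^ 2) := by
  classical
  -- characteristic 2
  have h2 : (2 : F) = 0 := by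
    have h0 : ((Fintype.card F : ℕ) : F) = 0 := FiniteField.cast_card_eq_zero F
    rw [hcard] at h0
    push_cast at h0
    exact pow_eq_zero_iff (by omega) |>.mp h0
  haveI hch : CharP F 2 := (CharP.charP_iff_prime_eq_zero Nat.prime_two).mpr h2
  have hg0 : g ≠ 0 := fun h => hgx ⟨0, by omega⟩ (by simp [h])
  have hdegg : g.degree = (t : ℕ) := by
    rw [Polynomial.degree_eq_natDegree hg0, hdeg]
  -- the evaluation map
  set e : F[X] →ₗ[F] (Fin n → F) := ev x (y ^ 2) with he
  -- generating families
  set bP : Fin t → F[X] := fun a => g * X ^ (a : ℕ) with hbP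
  set bQ : Fin t → F[X] := fun a => X ^ (2 * (a : ℕ)) with hbQ
  set bS : Fin (2 * t) → F[X] := fun a => X ^ (a : ℕ) with hbS
  set P : Submodule F F[X] := span F (Set.range bP) with hP
  set Q : Submodule F F[X] := span F (Set.range bQ) with hQ
  set S : Submodule F F[X] := span F (Set.range bS) with hS
  have hynz : ∀ i, y i ≠ 0 := fun i => by rw [hy]; exact inv_ne_zero (hgx i)
  have hkey : ∀ i, y i ^ 2 * g.eval (x i) = y i := by
    intro i
    rw [hy, pow_two, mul_assoc, inv_mul_cancel₀ (hgx i), mul_one]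
  -- GRS codes as images
  have hGRS1 : GRS F t x y = Submodule.map e P := by
    rw [GRS, hP, Submodule.map_span, ← Set.range_comp, image_lt_eq_range]
    have hfun : (fun a : Fin t => y * x ^ (a : ℕ)) = ⇑e ∘ bP := by
      funext a
      funext i
      simp only [Function.comp_apply, he, ev_apply, hbP, Polynomial.eval_mul,
        Polynomial.eval_pow, Polynomial.eval_X, Pi.mul_apply, Pi.pow_apply]
      rw [← mul_assoc, hkey]
    rw [hfun]
  have hGRS2 : GRS F t (x ^ 2) (y ^ 2) = Submodule.map e Q := by
    rw [GRS, hQ, Submodule.map_span, ← Set.range_comp, image_lt_eq_range]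
    have hfun : (fun a : Fin t => y ^ 2 * (x ^ 2) ^ (a : ℕ)) = ⇑e ∘ bQ := by
      funext a
      funext i
      simp only [Function.comp_apply, he, ev_apply, hbQ, Polynomial.eval_pow,
        Polynomial.eval_X, Pi.mul_apply, Pi.pow_apply]
      rw [pow_mul]
    rw [hfun]
  have hGRS3 : GRS F (2 * t) x (y ^ 2) = Submodule.map e S := by
    rw [GRS, hS, Submodule.map_span, ← Set.range_comp, image_lt_eq_range]
    have hfun : (fun a : Fin (2 * t) => y ^ 2 * x ^ (a : ℕ)) = ⇑e ∘ bS := by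
      funext a
      funext i
      simp only [Function.comp_apply, he, ev_apply, hbS, Polynomial.eval_pow,
        Polynomial.eval_X, Pi.mul_apply, Pi.pow_apply]
    rw [hfun]
  -- degree bounds
  have hQle : Q ≤ degreeLT F (2 * t) :=
    span_Xpow_le_degreeLT _ (fun a => by omega)
  have hSle : S ≤ degreeLT F (2 * t) :=
    span_Xpow_le_degreeLT _ (fun a => a.isLt)
  have hPle : P ≤ degreeLT F (2 * t) := by
    rw [hP, span_le]
    rintro - ⟨a, rfl⟩
    rw [SetLike.mem_coe, Polynomial.mem_degreeLT, hbP]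
    calc (g * X ^ (a : ℕ)).degree ≤ g.degree + ((a : ℕ) : WithBot ℕ) := by
          rw [Polynomial.degree_mul, Polynomial.degree_X_pow]
        _ < (2 * t : ℕ) := by
          rw [hdegg]
          have : (t : ℕ) + (a : ℕ) < 2 * t := by omega
          exact_mod_cast Nat.cast_lt.mpr this |>.trans_le le_rfl
  -- evaluation is injective on degree < n
  have hinj : ∀ r : F[X], r ∈ degreeLT F (2 * t) → e r = 0 → r = 0 := by
    intro r hr hr0
    by_contra hrne
    have hroots : ∀ i, r.IsRoot (x i) := by
      intro i
      have := congrFun hr0 i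
      simp only [he, ev_apply, Pi.zero_apply, Pi.pow_apply] at this
      have hyne : y i ^ 2 ≠ 0 := pow_ne_zero _ (hynz i)
      exact (mul_eq_zero.mp this).resolve_left hyne
    have hsub : Finset.univ.image x ⊆ r.roots.toFinset := by
      intro v hv
      obtain ⟨i, -, rfl⟩ := Finset.mem_image.mp hv
      rw [Multiset.mem_toFinset, Polynomial.mem_roots hrne]
      exact hroots i
    have hcard1 : n ≤ r.roots.toFinset.card := by
      have := Finset.card_le_card hsub
      rwa [Finset.card_image_of_injective _ hx, Finset.card_univ, Fintype.card_fin] at this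
    have hcard2 : r.roots.toFinset.card ≤ r.natDegree :=
      (Multiset.toFinset_card_le _).trans (Polynomial.card_roots' r)
    have hdlt : r.natDegree < 2 * t := by
      have hh := Polynomial.mem_degreeLT.mp hr
      exact (Polynomial.natDegree_lt_iff_degree_lt hrne).mpr (by exact_mod_cast hh)
    omega
  -- P ⊓ Q = ⊥ (polynomial level)
  have hPQ : P ⊓ Q = ⊥ := by
    rw [eq_bot_iff]
    rintro r hr
    have hrP : r ∈ P := hr.1
    have hrQ : r ∈ span F (Set.range bQ) := hr.2
    rw [mem_span_range_iff_exists_fun] at hrQ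
    obtain ⟨c, hc⟩ := hrQ
    have hd2 : ∀ b : F, (b ^ (2 ^ (m - 1))) ^ 2 = b := by
      intro b
      rw [← pow_mul]
      have h22 : 2 ^ (m - 1) * 2 = 2 ^ m := by
        rw [← pow_succ]
        congr 1
        omega
      rw [h22, ← hcard, FiniteField.pow_card]
    set s : F[X] := ∑ a : Fin t, (c a ^ (2 ^ (m - 1))) • X ^ (a : ℕ) with hs
    haveI : CharP F[X] 2 := Polynomial.instCharP 2
    have hs2 : s ^ 2 = r := by
      rw [hs, CharTwo.sum_sq, ← hc]
      congr 1
      funext a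
      rw [_root_.smul_pow, hd2, ← pow_mul, mul_comm (a : ℕ) 2]
    have hsmem : s ∈ degreeLT F t := by
      apply span_Xpow_le_degreeLT (fun a : Fin t => (a : ℕ)) (fun a => a.isLt)
      rw [hs]
      exact sum_mem fun a _ => smul_mem _ _ (subset_span ⟨a, rfl⟩)
    -- r ∈ P means g ∣ r
    have hgdvd : g ∣ r := by
      have hrP' : r ∈ span F (Set.range bP) := hrP
      rw [mem_span_range_iff_exists_fun] at hrP'
      obtain ⟨cp, hcp⟩ := hrP'
      refine ⟨∑ a : Fin t, cp a • X ^ (a : ℕ), ?_⟩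
      rw [Finset.mul_sum, ← hcp]
      congr 1
      funext a
      rw [hbP, mul_smul_comm]
    have hgs : g ∣ s := by
      rw [← hs2] at hgdvd
      exact (hsqfr.dvd_pow_iff_dvd two_ne_zero).mp hgdvd
    have hs0 : s = 0 := by
      by_contra hsne
      have h1 : g.degree ≤ s.degree := Polynomial.degree_le_of_dvd hgs hsne
      have h2 : s.degree < (t : ℕ) := Polynomial.mem_degreeLT.mp hsmem
      rw [hdegg] at h1
      exact absurd (h1.trans_lt h2) (lt_irrefl _)
    rw [← hs2, hs0]
    simp
  -- linear independence and dimensions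
  have liS : LinearIndependent F bS := li_Xpow _ (fun a b h => Fin.ext h)
  have liQ : LinearIndependent F bQ := li_Xpow (fun a : Fin t => 2 * (a : ℕ))
    (fun a b h => by
      simp only at h
      exact Fin.ext (by omega))
  have liT : LinearIndependent F (fun a : Fin t => (X : F[X]) ^ (a : ℕ)) :=
    li_Xpow _ (fun a b h => Fin.ext h)
  have liP : LinearIndependent F bP := by
    have hmul : ∀ a : Fin t, bP a = (LinearMap.mulLeft F g) (X ^ (a : ℕ)) := fun a => rfl
    have : LinearIndependent F (fun a : Fin t => (LinearMap.mulLeft F g) (X ^ (a : ℕ))) := by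
      apply LinearIndependent.map' liT
      rw [LinearMap.ker_eq_bot]
      exact fun p q hpq => mul_left_cancel₀ hg0 hpq
    simpa [hmul] using this
  haveI : FiniteDimensional F P := FiniteDimensional.span_of_finite F (Set.finite_range bP)
  haveI : FiniteDimensional F Q := FiniteDimensional.span_of_finite F (Set.finite_range bQ)
  haveI : FiniteDimensional F S := FiniteDimensional.span_of_finite F (Set.finite_range bS)
  have frP : Module.finrank F P = t := by
    rw [hP, finrank_span_eq_card liP, Fintype.card_fin]
  have frQ : Module.finrank F Q = t := by
    rw [hQ, finrank_span_eq_card liQ, Fintype.card_fin]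
  have frS : Module.finrank F S = 2 * t := by
    rw [hS, finrank_span_eq_card liS, Fintype.card_fin]
  -- P ⊔ Q = S
  have hPQS : P ⊔ Q = S := by
    have hle : P ⊔ Q ≤ S := by
      apply sup_le
      · rw [hP, span_le]
        rintro - ⟨a, rfl⟩
        -- g * X^a ∈ S : expand g in monomials
        have hrep : g = ∑ i ∈ Finset.range (t + 1), Polynomial.C (g.coeff i) * X ^ i := by
          conv_lhs => rw [g.as_sum_range' (t + 1) (by omega)]
          simp [← Polynomial.C_mul_X_pow_eq_monomial]
        show g * X ^ (a : ℕ) ∈ (S : Set F[X])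
        rw [SetLike.mem_coe, hrep, Finset.sum_mul]
        apply sum_mem
        intro i hi
        rw [mul_assoc, ← pow_add, ← Polynomial.smul_eq_C_mul]
        apply smul_mem
        apply subset_span
        refine ⟨⟨i + (a : ℕ), ?_⟩, rfl⟩
        have : i ≤ t := by
          have := Finset.mem_range.mp hi; omega
        omega
      · rw [hQ, span_le]
        rintro - ⟨a, rfl⟩
        exact subset_span ⟨⟨2 * (a : ℕ), by omega⟩, rfl⟩
    have hfr : Module.finrank F S ≤ Module.finrank F (P ⊔ Q : Submodule F F[X]) := by
      have := Submodule.finrank_sup_add_finrank_inf_eq P Q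
      rw [hPQ] at this
      simp only [finrank_bot] at this
      omega
    exact (Submodule.eq_of_le_of_finrank_le hle hfr).symm ▸ rfl
  constructor
  · -- intersection is trivial
    rw [hGRS1, hGRS2, eq_bot_iff]
    rintro v ⟨hv1, hv2⟩
    obtain ⟨p, hpP, hpv⟩ := hv1
    obtain ⟨q, hqQ, hqv⟩ := hv2
    have hpq : p - q = 0 := by
      apply hinj
      · exact Submodule.sub_mem _ (hPle hpP) (hQle hqQ)
      · rw [map_sub, hpv, hqv, sub_self]
    have hpeq : p = q := by rwa [sub_eq_zero] at hpq
    have : p ∈ P ⊓ Q := ⟨hpP, hpeq ▸ hqQ⟩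
    rw [hPQ] at this
    simp only [Submodule.mem_bot] at this
    rw [Submodule.mem_bot, ← hpv, this, map_zero]
  · rw [hGRS1, hGRS2, hGRS3, ← Submodule.map_sup, hPQS]
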